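/- arXiv:2101.06008 — 2 statements merged into one kernel-verified Lean document; each statement's English description precedes it below -/
import Mathlib

section
/- Let S and r be parameters with 0 < S < 4r, and let u₀ be the standing wave. There is no twice continuously differentiable function h : ℝ → ℝ with h and h' bounded such that (Lh)(x) = u₀'(x) for all x ∈ ℝ. -/
open Real Filter Topology

noncomputable def fpoly (u : ℝ) : ℝ := u * (2 * u - 1) * (1 - u)

noncomputable def Lop (S r : ℝ) (u₀ h : ℝ → ℝ) : ℝ → ℝ := fun x =>
  deriv (deriv h) x + (4 * S / r) * deriv u₀ x * (2 * u₀ x - 1) * deriv h x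
    + S * (deriv fpoly (u₀ x) + (4 / r) * (deriv u₀ x) ^ 2) * h x

/-!
Differentiating the standing-wave equation gives `L u₀' = 0`. If `L h = u₀'`, Abel's identity
shows that the weighted Wronskian `W = w (u₀' h' - u₀'' h)`, with `w = exp ((4S/r)(u₀² - u₀))` an
integrating factor of the first-order coefficient of `L`, satisfies `W' = w u₀'² ≥ 0`.
A first integral of the equation makes `u₀'²` converge at `±∞`, and the limit is `0` because `u₀`
converges there; then `u₀'' → 0` by the equation itself. As `h, h'` are bounded and `w → 1`,
the nondecreasing function `W` vanishes at both ends, hence identically, so `u₀' ≡ 0`: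
impossible, since `u₀(-∞) = 1 ≠ 0 = u₀(+∞)`.
-/

theorem hasDerivAt_fpoly (u : ℝ) : HasDerivAt fpoly (-6 * u ^ 2 + 6 * u - 1) u := by
  have h := ((hasDerivAt_id' u).fun_mul (((hasDerivAt_id' u).const_mul 2).sub_const 1)).fun_mul
    ((hasDerivAt_const u 1).fun_sub (hasDerivAt_id' u))
  exact h.congr_deriv (by ring)

theorem deriv_fpoly (u : ℝ) : deriv fpoly u = -6 * u ^ 2 + 6 * u - 1 :=
  (hasDerivAt_fpoly u).deriv

theorem continuous_fpoly : Continuous fpoly := by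
  unfold fpoly
  fun_prop

theorem tendsto_deriv_atTop_zero_of_tendsto_deriv_sq {f : ℝ → ℝ} {a k : ℝ}
    (hf : Differentiable ℝ f) (hfa : Tendsto f atTop (𝓝 a))
    (hk : Tendsto (fun x => deriv f x ^ 2) atTop (𝓝 k)) :
    Tendsto (deriv f) atTop (𝓝 0) := by
  have hslope : ∀ x, ∃ c ∈ Set.Ioo x (x + 1), deriv f c = f (x + 1) - f x := fun x => by
    simpa using exists_deriv_eq_slope f (lt_add_one x) hf.continuous.continuousOn
      hf.differentiableOn
  choose c hc hcf using hslope
  have hk0 : k = 0 := by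
    have hc_top : Tendsto c atTop atTop := tendsto_atTop_mono (fun x => (hc x).1.le) tendsto_id
    have hdiff : Tendsto (fun x => (f (x + 1) - f x) ^ 2) atTop (𝓝 0) := by
      simpa using ((hfa.comp (tendsto_atTop_add_const_right _ 1 tendsto_id)).sub hfa).pow 2
    refine tendsto_nhds_unique (hk.comp hc_top) ?_
    simpa [Function.comp_def, hcf] using hdiff
  rw [tendsto_zero_iff_abs_tendsto_zero]
  simpa [Function.comp_def, hk0, sqrt_sq_eq_abs] using hk.sqrt

theorem tendsto_deriv_atBot_zero_of_tendsto_deriv_sq {f : ℝ → ℝ} {a k : ℝ}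
    (hf : Differentiable ℝ f) (hfa : Tendsto f atBot (𝓝 a))
    (hk : Tendsto (fun x => deriv f x ^ 2) atBot (𝓝 k)) :
    Tendsto (deriv f) atBot (𝓝 0) := by
  have hreflected := tendsto_deriv_atTop_zero_of_tendsto_deriv_sq (f := fun x => f (-x))
    (hf.comp differentiable_neg) (hfa.comp tendsto_neg_atTop_atBot)
    (by simpa [Function.comp_def, deriv_comp_neg] using hk.comp tendsto_neg_atTop_atBot)
  simpa [deriv_comp_neg, Function.comp_def] using (hreflected.comp tendsto_neg_atBot_atTop).neg

/-- Abel's identity for `L = D² + b D + c`, where `w' = b w`. -/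
theorem hasDerivAt_wronskian {w y z : ℝ → ℝ} {x b c : ℝ} (hw : HasDerivAt w (b * w x) x)
    (hy : DifferentiableAt ℝ y x) (hy' : DifferentiableAt ℝ (deriv y) x)
    (hz : DifferentiableAt ℝ z x) (hz' : DifferentiableAt ℝ (deriv z) x) :
    HasDerivAt (fun t => w t * (y t * deriv z t - deriv y t * z t))
      (w x * (y x * (deriv (deriv z) x + b * deriv z x + c * z x)
        - z x * (deriv (deriv y) x + b * deriv y x + c * y x))) x := by
  refine (hw.fun_mul ((hy.hasDerivAt.fun_mul hz'.hasDerivAt).fun_sub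
    (hy'.hasDerivAt.fun_mul hz.hasDerivAt))).congr_deriv ?_
  ring

theorem eq_zero_of_hasDerivAt_of_nonneg_of_tendsto_zero {W W' : ℝ → ℝ}
    (hW : ∀ x, HasDerivAt W (W' x) x) (hW' : ∀ x, 0 ≤ W' x)
    (hbot : Tendsto W atBot (𝓝 0)) (htop : Tendsto W atTop (𝓝 0)) (x : ℝ) : W' x = 0 := by
  have hmono : Monotone W :=
    monotone_of_deriv_nonneg (fun x => (hW x).differentiableAt) fun x => (hW x).deriv ▸ hW' x
  have hW0 : W = fun _ => 0 :=
    funext fun y => le_antisymm (hmono.ge_of_tendsto htop y) (hmono.le_of_tendsto hbot y)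
  exact (hW x).unique (hW0 ▸ hasDerivAt_const x 0)

theorem exists_deriv_ne_zero_of_tendsto {f : ℝ → ℝ} {a b : ℝ} (hf : Differentiable ℝ f)
    (ha : Tendsto f atBot (𝓝 a)) (hb : Tendsto f atTop (𝓝 b)) (hab : a ≠ b) :
    ∃ x, deriv f x ≠ 0 := by
  by_contra! h
  have hconst : f = fun _ => f 0 := funext fun x => is_const_of_deriv_eq_zero hf h x 0
  rw [hconst] at ha hb
  exact hab ((tendsto_nhds_unique ha tendsto_const_nhds).trans
    (tendsto_nhds_unique tendsto_const_nhds hb))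

theorem tendsto_exp_mul_sq_sub_self {l : Filter ℝ} {u : ℝ → ℝ} {v : ℝ}
    (hv : Tendsto u l (𝓝 v)) (hv01 : v = 0 ∨ v = 1) (c : ℝ) :
    Tendsto (fun x => exp (c * (u x ^ 2 - u x))) l (𝓝 1) := by
  have hlim := (continuous_exp.tendsto _).comp (((hv.pow 2).sub hv).const_mul c)
  rcases hv01 with rfl | rfl <;> simpa [Function.comp_def] using hlim

def SolvesStandingWave (S r : ℝ) (u : ℝ → ℝ) : Prop :=
  ∀ x, deriv (deriv u) x + S * fpoly (u x) + (2 * S / r) * (2 * u x - 1) * deriv u x ^ 2 = 0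

namespace StandingWave

noncomputable def potential (S r v : ℝ) : ℝ :=
  ∫ t in (0 : ℝ)..v, S * exp ((2 * S / r) * (t ^ 2 - t)) ^ 2 * fpoly t

/-- A first integral of the standing-wave equation: `exp ((2S/r)(u² - u))` is an integrating
factor absorbing the `u'²` term. -/
noncomputable def energy (S r : ℝ) (u : ℝ → ℝ) (x : ℝ) : ℝ :=
  (exp ((2 * S / r) * (u x ^ 2 - u x)) * deriv u x) ^ 2 / 2 + potential S r (u x)

noncomputable def wronskian (S r : ℝ) (u h : ℝ → ℝ) (x : ℝ) : ℝ :=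
  exp ((4 * S / r) * (u x ^ 2 - u x)) * (deriv u x * deriv h x - deriv (deriv u) x * h x)

theorem hasDerivAt_potential (S r v : ℝ) :
    HasDerivAt (potential S r) (S * exp ((2 * S / r) * (v ^ 2 - v)) ^ 2 * fpoly v) v :=
  (Continuous.integral_hasStrictDerivAt (by have := continuous_fpoly; fun_prop) 0 v).hasDerivAt

variable {S r : ℝ} {u₀ : ℝ → ℝ}

theorem deriv_deriv_eq (hode : SolvesStandingWave S r u₀) :
    deriv (deriv u₀) = fun x =>
      -(S * fpoly (u₀ x)) - (2 * S / r) * (2 * u₀ x - 1) * deriv u₀ x ^ 2 :=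
  funext fun x => by linarith [hode x]

theorem hasDerivAt_energy (hu : ContDiff ℝ 2 u₀) (hode : SolvesStandingWave S r u₀) (x : ℝ) :
    HasDerivAt (energy S r u₀) 0 x := by
  have hu' := (hu.differentiable two_ne_zero x).hasDerivAt
  have hp' := (hu.differentiable_deriv_two x).hasDerivAt
  have he := (((hu'.fun_pow 2).fun_sub hu').const_mul (2 * S / r)).exp
  refine ((((he.fun_mul hp').fun_pow 2).div_const 2).fun_add
    ((hasDerivAt_potential S r (u₀ x)).comp x hu')).congr_deriv ?_
  linear_combination (exp ((2 * S / r) * (u₀ x ^ 2 - u₀ x)) ^ 2 * deriv u₀ x) * hode x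

theorem energy_eq (hu : ContDiff ℝ 2 u₀) (hode : SolvesStandingWave S r u₀) (x : ℝ) :
    energy S r u₀ x = energy S r u₀ 0 :=
  is_const_of_deriv_eq_zero (fun t => (hasDerivAt_energy hu hode t).differentiableAt)
    (fun t => (hasDerivAt_energy hu hode t).deriv) x 0

theorem tendsto_deriv_sq (hu : ContDiff ℝ 2 u₀) (hode : SolvesStandingWave S r u₀)
    {l : Filter ℝ} {v : ℝ} (hv : Tendsto u₀ l (𝓝 v)) (hv01 : v = 0 ∨ v = 1) :
    Tendsto (fun x => deriv u₀ x ^ 2) l (𝓝 (2 * (energy S r u₀ 0 - potential S r v))) := by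
  have hV : Tendsto (fun x => potential S r (u₀ x)) l (𝓝 (potential S r v)) :=
    (hasDerivAt_potential S r v).continuousAt.tendsto.comp hv
  have hlim : Tendsto (fun x => 2 * (energy S r u₀ 0 - potential S r (u₀ x)) /
      exp ((2 * S / r) * (u₀ x ^ 2 - u₀ x)) ^ 2) l
      (𝓝 (2 * (energy S r u₀ 0 - potential S r v) / 1 ^ 2)) :=
    ((hV.const_sub _).const_mul 2).div ((tendsto_exp_mul_sq_sub_self hv hv01 _).pow 2)
      (by norm_num)
  rw [one_pow, div_one] at hlim
  refine hlim.congr fun x => ?_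
  rw [← energy_eq hu hode x, energy]
  field_simp
  ring

theorem tendsto_deriv_atTop (hu : ContDiff ℝ 2 u₀) (hode : SolvesStandingWave S r u₀) {v : ℝ}
    (hv : Tendsto u₀ atTop (𝓝 v)) (hv01 : v = 0 ∨ v = 1) : Tendsto (deriv u₀) atTop (𝓝 0) :=
  tendsto_deriv_atTop_zero_of_tendsto_deriv_sq (hu.differentiable two_ne_zero) hv
    (tendsto_deriv_sq hu hode hv hv01)

theorem tendsto_deriv_atBot (hu : ContDiff ℝ 2 u₀) (hode : SolvesStandingWave S r u₀) {v : ℝ}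
    (hv : Tendsto u₀ atBot (𝓝 v)) (hv01 : v = 0 ∨ v = 1) : Tendsto (deriv u₀) atBot (𝓝 0) :=
  tendsto_deriv_atBot_zero_of_tendsto_deriv_sq (hu.differentiable two_ne_zero) hv
    (tendsto_deriv_sq hu hode hv hv01)

theorem tendsto_deriv_deriv (hode : SolvesStandingWave S r u₀) {l : Filter ℝ} {v : ℝ}
    (hv : Tendsto u₀ l (𝓝 v)) (hv01 : v = 0 ∨ v = 1) (hp : Tendsto (deriv u₀) l (𝓝 0)) :
    Tendsto (deriv (deriv u₀)) l (𝓝 0) := by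
  rw [deriv_deriv_eq hode]
  have hlim := ((((continuous_fpoly.tendsto v).comp hv).const_mul S).neg).sub
    ((((hv.const_mul 2).sub_const 1).const_mul (2 * S / r)).mul (hp.pow 2))
  rcases hv01 with rfl | rfl <;> simpa [fpoly, Function.comp_def] using hlim

theorem hasDerivAt_deriv_deriv (hu : ContDiff ℝ 2 u₀) (hode : SolvesStandingWave S r u₀)
    (x : ℝ) : HasDerivAt (deriv (deriv u₀))
      (-(S * (deriv fpoly (u₀ x) * deriv u₀ x)) - (2 * S / r) *
        (2 * deriv u₀ x * deriv u₀ x ^ 2 + (2 * u₀ x - 1) * (2 * deriv u₀ x * deriv (deriv u₀) x)))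
      x := by
  have hu' := (hu.differentiable two_ne_zero x).hasDerivAt
  have hp' := (hu.differentiable_deriv_two x).hasDerivAt
  rw [deriv_deriv_eq hode]
  refine ((((hasDerivAt_fpoly (u₀ x)).comp x hu').const_mul S).fun_neg.fun_sub
    ((((hu'.const_mul 2).sub_const 1).const_mul (2 * S / r)).fun_mul
      (hp'.fun_pow 2))).congr_deriv ?_
  rw [deriv_fpoly, deriv_deriv_eq hode]
  ring

theorem Lop_deriv_eq_zero (hu : ContDiff ℝ 2 u₀) (hode : SolvesStandingWave S r u₀) (x : ℝ) :
    Lop S r u₀ (deriv u₀) x = 0 := by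
  rw [Lop, (hasDerivAt_deriv_deriv hu hode x).deriv]
  ring

theorem hasDerivAt_wronskian_of_Lop_eq (hu : ContDiff ℝ 2 u₀)
    (hode : SolvesStandingWave S r u₀) {h : ℝ → ℝ} (hh : ContDiff ℝ 2 h)
    (hLh : ∀ x, Lop S r u₀ h x = deriv u₀ x) (x : ℝ) :
    HasDerivAt (wronskian S r u₀ h) (exp ((4 * S / r) * (u₀ x ^ 2 - u₀ x)) * deriv u₀ x ^ 2) x := by
  have hu' := (hu.differentiable two_ne_zero x).hasDerivAt
  have hw := (((hu'.fun_pow 2).fun_sub hu').const_mul (4 * S / r)).exp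
  have habel := hasDerivAt_wronskian (b := (4 * S / r) * deriv u₀ x * (2 * u₀ x - 1))
    (c := S * (deriv fpoly (u₀ x) + (4 / r) * deriv u₀ x ^ 2))
    (hw.congr_deriv (by ring)) (hu.differentiable_deriv_two x)
    (hasDerivAt_deriv_deriv hu hode x).differentiableAt (hh.differentiable two_ne_zero x)
    (hh.differentiable_deriv_two x)
  refine habel.congr_deriv ?_
  have hLp := Lop_deriv_eq_zero hu hode x
  rw [Lop] at hLp
  rw [hLp, ← Lop, hLh x]
  ring

theorem tendsto_wronskian (hode : SolvesStandingWave S r u₀) {l : Filter ℝ} {v : ℝ}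
    (hv : Tendsto u₀ l (𝓝 v)) (hv01 : v = 0 ∨ v = 1) (hp : Tendsto (deriv u₀) l (𝓝 0))
    {h : ℝ → ℝ} (hh : ∃ M, ∀ x, |h x| ≤ M) (hh' : ∃ M', ∀ x, |deriv h x| ≤ M') :
    Tendsto (wronskian S r u₀ h) l (𝓝 0) := by
  have hA : Tendsto (fun x => deriv u₀ x * deriv h x - deriv (deriv u₀) x * h x) l (𝓝 0) := by
    simpa using (hp.zero_mul_isBoundedUnder_le (isBoundedUnder_of hh')).sub
      ((tendsto_deriv_deriv hode hv hv01 hp).zero_mul_isBoundedUnder_le (isBoundedUnder_of hh))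
  have hlim := (tendsto_exp_mul_sq_sub_self hv hv01 (4 * S / r)).mul hA
  rwa [mul_zero] at hlim

end StandingWave

theorem uzero_prime_not_in_range_general (S r : ℝ)
    (u₀ : ℝ → ℝ) (hu : ContDiff ℝ 2 u₀)
    (hode : ∀ x : ℝ, deriv (deriv u₀) x + S * fpoly (u₀ x)
      + (2 * S / r) * (2 * u₀ x - 1) * (deriv u₀ x) ^ 2 = 0)
    (hlim1 : Tendsto u₀ atBot (𝓝 1)) (hlim0 : Tendsto u₀ atTop (𝓝 0)) :
    ¬ ∃ h : ℝ → ℝ, ContDiff ℝ 2 h ∧ (∃ M : ℝ, ∀ x : ℝ, |h x| ≤ M) ∧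
      (∃ M' : ℝ, ∀ x : ℝ, |deriv h x| ≤ M') ∧
      ∀ x : ℝ, Lop S r u₀ h x = deriv u₀ x := by
  rintro ⟨h, hh, hbdd, hbdd', hLh⟩
  have hW' := eq_zero_of_hasDerivAt_of_nonneg_of_tendsto_zero
    (StandingWave.hasDerivAt_wronskian_of_Lop_eq hu hode hh hLh) (fun x => by positivity)
    (StandingWave.tendsto_wronskian hode hlim1 (Or.inr rfl)
      (StandingWave.tendsto_deriv_atBot hu hode hlim1 (Or.inr rfl)) hbdd hbdd')
    (StandingWave.tendsto_wronskian hode hlim0 (Or.inl rfl)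
      (StandingWave.tendsto_deriv_atTop hu hode hlim0 (Or.inl rfl)) hbdd hbdd')
  obtain ⟨x, hx⟩ := exists_deriv_ne_zero_of_tendsto (hu.differentiable two_ne_zero) hlim1 hlim0
    one_ne_zero
  exact mul_ne_zero (exp_pos _).ne' (pow_ne_zero 2 hx) (hW' x)

theorem uzero_prime_not_in_range (S r : ℝ) (hS : 0 < S) (hSr : S < 4 * r)
    (u₀ : ℝ → ℝ) (hu : ContDiff ℝ 2 u₀)
    (hode : ∀ x : ℝ, deriv (deriv u₀) x + S * fpoly (u₀ x)
      + (2 * S / r) * (2 * u₀ x - 1) * (deriv u₀ x) ^ 2 = 0)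
    (hlim1 : Tendsto u₀ atBot (𝓝 1)) (hlim0 : Tendsto u₀ atTop (𝓝 0))
    (hnorm : u₀ 0 = 1 / 2) (hmono : StrictAnti u₀)
    (hbound : ∀ x : ℝ, 0 < u₀ x ∧ u₀ x < 1) :
    ¬ ∃ h : ℝ → ℝ, ContDiff ℝ 2 h ∧ (∃ M : ℝ, ∀ x : ℝ, |h x| ≤ M) ∧
      (∃ M' : ℝ, ∀ x : ℝ, |deriv h x| ≤ M') ∧
      ∀ x : ℝ, Lop S r u₀ h x = deriv u₀ x :=
  uzero_prime_not_in_range_general S r u₀ hu hode hlim1 hlim0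
end

section
/- Let S and r be parameters with 0 < S < 4r, and let u₀ be the standing wave. Then the quantity c₁ := −(∫_ℝ (g(u₀(x)) + (2/r)(u₀'(x))²)·u₀'(x)·e^{(4S/r)(u₀(x)² − u₀(x))} dx) / (∫_ℝ (u₀'(x))²·e^{(4S/r)(u₀(x)² − u₀(x))} dx) equals (∫₀¹ (r/(4S))·(1 − e^{−(4S/r)(u − u²)}) du) / (∫₀¹ ((r²/(8S))·e^{(4S/r)(u − u²)} − (r/2)(u − u²) − r²/(8S))^{1/2} · e^{−(4S/r)(u − u²)} du). -/
open Real Filter Topology MeasureTheory intervalIntegral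

noncomputable def gpoly (u : ℝ) : ℝ := u * (1 - u)

/-!
With the integrating factor `exp ((4S/r)(u₀² - u₀))` the equation conserves the energy
`(u₀'² - P(u₀)) · exp ((4S/r)(u₀² - u₀))`, where `P = wavePotential S r` solves the linear
equation `P' = -(4S/r)(2u - 1) P - 2S f`. At `+∞`, `u₀ → 0` and `P(0) = 0`, so `u₀'²` tends to
the energy `c`; since `u₀` converges, the limit `-√c` of `u₀'` must vanish, which gives the first
integral `u₀'² = P(u₀)`. With it (and `√P(u₀) = -u₀'`) both integrands take the form `F(u₀) u₀'`
with continuous `F`, and the substitution `u = u₀(x)` on all of `ℝ` turns them into the integrals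
over `[0, 1]`; it is legitimate because `u₀' ≤ 0` is integrable, with integral `u₀(+∞) - u₀(-∞)`.
-/

theorem eq_zero_of_tendsto_of_tendsto_deriv {f f' : ℝ → ℝ} {a l : ℝ}
    (hf : ∀ x, HasDerivAt f (f' x) x) (hfa : Tendsto f atTop (𝓝 a))
    (hf' : Tendsto f' atTop (𝓝 l)) : l = 0 := by
  have hmvt : ∀ x, ∃ ξ ∈ Set.Ioo x (x + 1), f' ξ = (f (x + 1) - f x) / (x + 1 - x) :=
    fun x => exists_hasDerivAt_eq_slope f f' (lt_add_one x)
      (fun y _ => (hf y).continuousAt.continuousWithinAt) (fun y _ => hf y)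
  choose ξ hξ hξf' using hmvt
  have hξ_top : Tendsto ξ atTop atTop := tendsto_atTop_mono (fun x => (hξ x).1.le) tendsto_id
  have hincr : Tendsto (fun x => (f (x + 1) - f x) / (x + 1 - x)) atTop (𝓝 ((a - a) / 1)) := by
    simp only [add_sub_cancel_left]
    exact ((hfa.comp (tendsto_atTop_add_const_right _ 1 tendsto_id)).sub hfa).div_const 1
  simpa using tendsto_nhds_unique (hf'.comp hξ_top) (hincr.congr fun x => (hξf' x).symm)

theorem integrable_deriv_of_nonpos {u u' : ℝ → ℝ} {a b : ℝ}
    (hu : ∀ x, HasDerivAt u (u' x) x) (hu' : Continuous u') (hneg : ∀ x, u' x ≤ 0)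
    (hbot : Tendsto u atBot (𝓝 a)) (htop : Tendsto u atTop (𝓝 b)) : Integrable u' := by
  refine integrable_of_intervalIntegral_norm_tendsto (a - b) (fun T => hu'.integrableOn_Ioc)
    tendsto_neg_atTop_atBot tendsto_id ?_
  have hnorm : ∀ T : ℝ, ∫ x in -T..T, ‖u' x‖ = u (-T) - u T := by
    intro T
    simp only [Real.norm_eq_abs, fun x => abs_of_nonpos (hneg x)]
    rw [intervalIntegral.integral_neg, integral_eq_sub_of_hasDerivAt (fun x _ => hu x)
      (hu'.intervalIntegrable _ _), neg_sub]
  exact ((hbot.comp tendsto_neg_atTop_atBot).sub htop).congr fun T => (hnorm T).symm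

theorem integral_comp_mul_deriv_of_tendsto {u u' F : ℝ → ℝ} {a b : ℝ} {K : Set ℝ}
    (hu : ∀ x, HasDerivAt u (u' x) x) (hu' : Integrable u') (hF : Continuous F)
    (hK : IsCompact K) (huK : ∀ x, u x ∈ K)
    (hbot : Tendsto u atBot (𝓝 a)) (htop : Tendsto u atTop (𝓝 b)) :
    ∫ x, F (u x) * u' x = ∫ t in a..b, F t := by
  have hucont : Continuous u := continuous_iff_continuousAt.2 fun x => (hu x).continuousAt
  obtain ⟨C, hC⟩ := hK.exists_bound_of_continuousOn hF.continuousOn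
  have hint : Integrable fun x => F (u x) * u' x :=
    hu'.bdd_mul (hF.comp hucont).aestronglyMeasurable
      (Eventually.of_forall fun x => hC _ (huK x))
  set Φ : ℝ → ℝ := fun t => ∫ s in a..t, F s
  have hΦ : ∀ t, HasDerivAt Φ (F t) t := fun t => (hF.integral_hasStrictDerivAt a t).hasDerivAt
  have hΦcont : Continuous Φ := continuous_iff_continuousAt.2 fun t => (hΦ t).continuousAt
  have key := integral_of_hasDerivAt_of_tendsto (fun x => (hΦ (u x)).comp x (hu x)) hint
    ((hΦcont.tendsto a).comp hbot) ((hΦcont.tendsto b).comp htop)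
  simpa [Φ] using key

noncomputable def wavePotential (S r u : ℝ) : ℝ :=
  r ^ 2 / (8 * S) * exp ((4 * S / r) * (u - u ^ 2)) - r / 2 * (u - u ^ 2) - r ^ 2 / (8 * S)

@[fun_prop]
theorem continuous_wavePotential (S r : ℝ) : Continuous (wavePotential S r) := by
  unfold wavePotential; fun_prop

theorem wavePotential_zero (S r : ℝ) : wavePotential S r 0 = 0 := by
  simp [wavePotential]

section

variable {S r : ℝ}

theorem hasDerivAt_wavePotential (hS : S ≠ 0) (hr : r ≠ 0) (u : ℝ) :
    HasDerivAt (wavePotential S r)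
      (-(4 * S / r) * (2 * u - 1) * wavePotential S r u - 2 * S * fpoly u) u := by
  have hq : HasDerivAt (fun v : ℝ => v - v ^ 2) (1 - 2 * u) u :=
    ((hasDerivAt_id' u).sub (hasDerivAt_pow 2 u)).congr_deriv (by ring)
  have hP := ((((hq.const_mul (4 * S / r)).exp).const_mul (r ^ 2 / (8 * S))).sub
    (hq.const_mul (r / 2))).sub_const (r ^ 2 / (8 * S))
  refine hP.congr_deriv ?_
  simp only [wavePotential, fpoly]
  field_simp
  ring

theorem gpoly_add_wavePotential_mul_exp (hS : S ≠ 0) (hr : r ≠ 0) (u : ℝ) :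
    (gpoly u + 2 / r * wavePotential S r u) * exp ((4 * S / r) * (u ^ 2 - u))
      = r / (4 * S) * (1 - exp (-(4 * S / r) * (u - u ^ 2))) := by
  have hexp : exp ((4 * S / r) * (u ^ 2 - u)) = (exp ((4 * S / r) * (u - u ^ 2)))⁻¹ := by
    rw [← exp_neg]; ring_nf
  rw [hexp, neg_mul, exp_neg]
  simp only [gpoly, wavePotential]
  field_simp
  ring

end

section

variable {S r : ℝ} {u : ℝ → ℝ}

theorem hasDerivAt_energy (hS : S ≠ 0) (hr : r ≠ 0) (hu : ContDiff ℝ 2 u)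
    (hode : ∀ x : ℝ, deriv (deriv u) x + S * fpoly (u x)
      + (2 * S / r) * (2 * u x - 1) * (deriv u x) ^ 2 = 0) (x : ℝ) :
    HasDerivAt (fun y => (deriv u y ^ 2 - wavePotential S r (u y)) *
      exp ((4 * S / r) * (u y ^ 2 - u y))) 0 x := by
  have hu1 : HasDerivAt u (deriv u x) x :=
    (hu.differentiable (by norm_num) x).hasDerivAt
  have hu2 : HasDerivAt (deriv u) (deriv (deriv u) x) x :=
    ((hu.iterate_deriv' 1 1).differentiable (by norm_num) x).hasDerivAt
  have hexp := (((hu1.pow 2).sub hu1).const_mul (4 * S / r)).exp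
  have hE := ((hu2.pow 2).sub ((hasDerivAt_wavePotential hS hr (u x)).comp x hu1)).mul hexp
  refine hE.congr_deriv ?_
  have hu'' : deriv (deriv u) x = -(S * fpoly (u x))
      - (2 * S / r) * (2 * u x - 1) * (deriv u x) ^ 2 := by linarith [hode x]
  simp only [Pi.sub_apply, Pi.pow_apply, Function.comp_apply, hu'']
  field_simp
  ring

theorem sq_deriv_eq_wavePotential (hS : S ≠ 0) (hr : r ≠ 0) (hu : ContDiff ℝ 2 u)
    (hode : ∀ x : ℝ, deriv (deriv u) x + S * fpoly (u x)
      + (2 * S / r) * (2 * u x - 1) * (deriv u x) ^ 2 = 0)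
    (hlim : Tendsto u atTop (𝓝 0)) (hneg : ∀ x, deriv u x ≤ 0)
    (x : ℝ) : deriv u x ^ 2 = wavePotential S r (u x) := by
  have hu1 : ∀ y, HasDerivAt u (deriv u y) y :=
    fun y => (hu.differentiable (by norm_num) y).hasDerivAt
  set c := (deriv u 0 ^ 2 - wavePotential S r (u 0)) * exp (4 * S / r * (u 0 ^ 2 - u 0))
  have hsq : ∀ y,
      deriv u y ^ 2 = wavePotential S r (u y) + c * exp (4 * S / r * (u y - u y ^ 2)) := by
    intro y
    have hE := is_const_of_deriv_eq_zero
      (fun z => (hasDerivAt_energy hS hr hu hode z).differentiableAt)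
      (fun z => (hasDerivAt_energy hS hr hu hode z).deriv) y 0
    rw [show c = _ from hE.symm, mul_assoc, ← exp_add]
    ring_nf
    simp
  have hsq_lim : Tendsto (fun y => deriv u y ^ 2) atTop (𝓝 c) := by
    have hcont : Continuous fun t => wavePotential S r t + c * exp (4 * S / r * (t - t ^ 2)) := by
      fun_prop
    simpa [hsq, Function.comp_def, wavePotential_zero] using (hcont.tendsto 0).comp hlim
  have hc : 0 ≤ c := ge_of_tendsto' hsq_lim fun y => sq_nonneg _
  have hderiv_lim : Tendsto (deriv u) atTop (𝓝 (-√c)) := by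
    refine ((continuous_sqrt.tendsto c).comp hsq_lim).neg.congr fun y => ?_
    simp [sqrt_sq_eq_abs, abs_of_nonpos (hneg y)]
  have hc0 : c = 0 := by
    have := eq_zero_of_tendsto_of_tendsto_deriv hu1 hlim hderiv_lim
    rwa [neg_eq_zero, sqrt_eq_zero hc] at this
  simpa [hc0] using hsq x

end

theorem speed_coefficient_formula_general (S r : ℝ) (hS : 0 < S) (hSr : S < 4 * r)
    (u₀ : ℝ → ℝ) (hu : ContDiff ℝ 2 u₀)
    (hode : ∀ x : ℝ, deriv (deriv u₀) x + S * fpoly (u₀ x)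
      + (2 * S / r) * (2 * u₀ x - 1) * (deriv u₀ x) ^ 2 = 0)
    (hlim1 : Tendsto u₀ atBot (𝓝 1)) (hlim0 : Tendsto u₀ atTop (𝓝 0))
    (hmono : StrictAnti u₀)
    (hbound : ∀ x : ℝ, 0 < u₀ x ∧ u₀ x < 1) :
    -(∫ x : ℝ, (gpoly (u₀ x) + (2 / r) * (deriv u₀ x) ^ 2) * deriv u₀ x *
          Real.exp ((4 * S / r) * ((u₀ x) ^ 2 - u₀ x))) /
        (∫ x : ℝ, (deriv u₀ x) ^ 2 * Real.exp ((4 * S / r) * ((u₀ x) ^ 2 - u₀ x)))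
      = (∫ u in (0:ℝ)..1, r / (4 * S) * (1 - Real.exp (-(4 * S / r) * (u - u ^ 2)))) /
        (∫ u in (0:ℝ)..1,
          Real.sqrt (r ^ 2 / (8 * S) * Real.exp ((4 * S / r) * (u - u ^ 2))
            - r / 2 * (u - u ^ 2) - r ^ 2 / (8 * S)) *
          Real.exp (-(4 * S / r) * (u - u ^ 2))) := by
  have hr : r ≠ 0 := by linarith
  have hu₀' : ∀ x, HasDerivAt u₀ (deriv u₀ x) x :=
    fun x => (hu.differentiable (by norm_num) x).hasDerivAt
  have hneg : ∀ x, deriv u₀ x ≤ 0 := fun x => hmono.antitone.deriv_nonpos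
  have hsq := sq_deriv_eq_wavePotential hS.ne' hr hu hode hlim0 hneg
  have hsubst : ∀ F : ℝ → ℝ, Continuous F →
      ∫ x, F (u₀ x) * deriv u₀ x = -∫ u in (0:ℝ)..1, F u := fun F hF => by
    rw [integral_comp_mul_deriv_of_tendsto hu₀'
      (integrable_deriv_of_nonpos hu₀' (hu.continuous_deriv (by norm_num)) hneg hlim1 hlim0)
      hF isCompact_Icc (fun x => ⟨(hbound x).1.le, (hbound x).2.le⟩) hlim1 hlim0,
      integral_symm]
  have hnum := hsubst (fun u => r / (4 * S) * (1 - exp (-(4 * S / r) * (u - u ^ 2))))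
    (by fun_prop)
  have hden := hsubst (fun u => -(√(wavePotential S r u) * exp (-(4 * S / r) * (u - u ^ 2))))
    (by fun_prop)
  rw [intervalIntegral.integral_neg, neg_neg] at hden
  have hnum_eq : ∀ x, (gpoly (u₀ x) + (2 / r) * (deriv u₀ x) ^ 2) * deriv u₀ x *
      exp ((4 * S / r) * ((u₀ x) ^ 2 - u₀ x))
      = r / (4 * S) * (1 - exp (-(4 * S / r) * (u₀ x - u₀ x ^ 2))) * deriv u₀ x := by
    intro x
    rw [hsq, ← gpoly_add_wavePotential_mul_exp hS.ne' hr]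
    ring
  have hden_eq : ∀ x, (deriv u₀ x) ^ 2 * exp ((4 * S / r) * ((u₀ x) ^ 2 - u₀ x))
      = -(√(wavePotential S r (u₀ x)) * exp (-(4 * S / r) * (u₀ x - u₀ x ^ 2)))
        * deriv u₀ x := by
    intro x
    rw [← hsq, sqrt_sq_eq_abs, abs_of_nonpos (hneg x)]
    ring_nf
  simp only [hnum_eq, hden_eq, hnum, hden, neg_neg]
  rfl

theorem speed_coefficient_formula (S r : ℝ) (hS : 0 < S) (hSr : S < 4 * r)
    (u₀ : ℝ → ℝ) (hu : ContDiff ℝ 2 u₀)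
    (hode : ∀ x : ℝ, deriv (deriv u₀) x + S * fpoly (u₀ x)
      + (2 * S / r) * (2 * u₀ x - 1) * (deriv u₀ x) ^ 2 = 0)
    (hlim1 : Tendsto u₀ atBot (𝓝 1)) (hlim0 : Tendsto u₀ atTop (𝓝 0))
    (hnorm : u₀ 0 = 1 / 2) (hmono : StrictAnti u₀)
    (hbound : ∀ x : ℝ, 0 < u₀ x ∧ u₀ x < 1) :
    -(∫ x : ℝ, (gpoly (u₀ x) + (2 / r) * (deriv u₀ x) ^ 2) * deriv u₀ x *
          Real.exp ((4 * S / r) * ((u₀ x) ^ 2 - u₀ x))) /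
        (∫ x : ℝ, (deriv u₀ x) ^ 2 * Real.exp ((4 * S / r) * ((u₀ x) ^ 2 - u₀ x)))
      = (∫ u in (0:ℝ)..1, r / (4 * S) * (1 - Real.exp (-(4 * S / r) * (u - u ^ 2)))) /
        (∫ u in (0:ℝ)..1,
          Real.sqrt (r ^ 2 / (8 * S) * Real.exp ((4 * S / r) * (u - u ^ 2))
            - r / 2 * (u - u ^ 2) - r ^ 2 / (8 * S)) *
          Real.exp (-(4 * S / r) * (u - u ^ 2))) :=
  speed_coefficient_formula_general S r hS hSr u₀ hu hode hlim1 hlim0 hmono hbound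
end
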